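/- arXiv:2411.01810 — 8 statements merged into one kernel-verified Lean document; each statement's English description precedes it below -/
import Mathlib

section
/- Let (N, M, V) be a fair division instance with additive valuations and let p be a price vector with all prices positive. If the solution (x, p) is pEF1 and x_i ⊆ MBB_i for every agent i, then Π_{i∈N} v_i(x_i) ≥ e^{-n/e} · Π_{i∈N} v_i(y_i) for every allocation y; that is, x is an e^{1/e}-approximation to the maximum Nash social welfare. -/
open Finset

noncomputable section

/-- Value of a bundle under additive valuations. -/
def val {n m : ℕ} (v : Fin n → Fin m → ℝ) (i : Fin n) (S : Finset (Fin m)) : ℝ :=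
  ∑ g ∈ S, v i g

/-- An allocation is a partition of the goods: every good belongs to exactly one bundle. -/
def IsAllocation {n m : ℕ} (x : Fin n → Finset (Fin m)) : Prop :=
  ∀ g : Fin m, ∃! i : Fin n, g ∈ x i

/-- Envy-freeness up to one good. -/
def EF1 {n m : ℕ} (v : Fin n → Fin m → ℝ) (x : Fin n → Finset (Fin m)) : Prop :=
  ∀ i j : Fin n, val v i (x i) < val v i (x j) →
    ∃ g ∈ x j, val v i ((x j).erase g) ≤ val v i (x i)

/-- A fractional allocation. -/
def IsFracAlloc {n m : ℕ} (y : Fin n → Fin m → ℝ) : Prop :=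
  (∀ i g, 0 ≤ y i g ∧ y i g ≤ 1) ∧ ∀ g : Fin m, ∑ i, y i g ≤ 1

/-- Value of agent `i`'s fractional bundle. -/
def fval {n m : ℕ} (v : Fin n → Fin m → ℝ) (i : Fin n) (y : Fin n → Fin m → ℝ) : ℝ :=
  ∑ g, y i g * v i g

/-- Fractional Pareto optimality. -/
def FPO {n m : ℕ} (v : Fin n → Fin m → ℝ) (x : Fin n → Finset (Fin m)) : Prop :=
  ¬ ∃ y : Fin n → Fin m → ℝ, IsFracAlloc y ∧
      (∀ i, val v i (x i) ≤ fval v i y) ∧ (∃ j, val v j (x j) < fval v j y)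

/-- Total price of a bundle. -/
def price {m : ℕ} (p : Fin m → ℝ) (S : Finset (Fin m)) : ℝ := ∑ g ∈ S, p g

/-- Price of a bundle after removing its most expensive good (`0` for the empty bundle). -/
def phat {m : ℕ} (p : Fin m → ℝ) (S : Finset (Fin m)) : ℝ :=
  if h : S.Nonempty then S.inf' h (fun g => price p (S.erase g)) else 0

/-- Price envy-freeness up to one good. -/
def PEF1 {n m : ℕ} (p : Fin m → ℝ) (x : Fin n → Finset (Fin m)) : Prop :=
  ∀ i j : Fin n, price p (x i) < price p (x j) →
    ∃ g ∈ x j, price p ((x j).erase g) ≤ price p (x i)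

/-- The set of maximum bang-per-buck goods of agent `i`. -/
def MBB {n m : ℕ} (v : Fin n → Fin m → ℝ) (p : Fin m → ℝ) (i : Fin n) : Set (Fin m) :=
  {g | ∀ h : Fin m, v i h / p h ≤ v i g / p g}

/-- `z ≤ exp (z/e)` for all real `z`. -/
lemma aux_le_exp_div (z : ℝ) : z ≤ Real.exp (z / Real.exp 1) := by
  rcases le_or_gt z 0 with h | h
  · exact h.trans (Real.exp_pos _).le
  · have he : (0:ℝ) < Real.exp 1 := Real.exp_pos 1
    have h1 := Real.add_one_le_exp (z / Real.exp 1 - 1)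
    have h2 : z / Real.exp 1 ≤ Real.exp (z / Real.exp 1 - 1) := by linarith
    have h3 : z ≤ Real.exp (z / Real.exp 1 - 1) * Real.exp 1 := by
      rw [div_le_iff₀ he] at h2; linarith
    calc z ≤ Real.exp (z / Real.exp 1 - 1) * Real.exp 1 := h3
    _ = Real.exp (z / Real.exp 1) := by rw [← Real.exp_add]; ring_nf

/-- `exp ((a-1)/e) ≤ a` for `1 ≤ a ≤ 1 + e`. -/
lemma aux_exp_sub_one_le {a : ℝ} (ha : 1 ≤ a) (ha' : a ≤ 1 + Real.exp 1) :
    Real.exp ((a - 1) / Real.exp 1) ≤ a := by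
  have he : (0:ℝ) < Real.exp 1 := Real.exp_pos 1
  have ha0 : (0:ℝ) < a := by linarith
  rcases le_or_gt a (Real.exp 1) with h | h
  · have k1 : (a - 1) / Real.exp 1 ≤ (a - 1) / a := by
      apply div_le_div_of_nonneg_left (by linarith) ha0 h
    have k2 : Real.exp ((a - 1) / a) ≤ a := by
      have hb := Real.add_one_le_exp ((1 - a) / a)
      have hb1 : 1 / a ≤ Real.exp ((1 - a) / a) := by
        have : (1 - a) / a + 1 = 1 / a := by field_simp; ring
        linarith
      have hb2 : Real.exp ((a - 1) / a) * Real.exp ((1 - a) / a) = 1 := by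
        rw [← Real.exp_add]; ring_nf; exact Real.exp_zero
      have hb3 : (0:ℝ) < Real.exp ((1 - a) / a) := Real.exp_pos _
      have hb4 : 1 ≤ a * Real.exp ((1 - a) / a) := by
        calc (1:ℝ) = a * (1 / a) := by field_simp
        _ ≤ a * Real.exp ((1 - a) / a) := mul_le_mul_of_nonneg_left hb1 ha0.le
      nlinarith [hb2, hb3, hb4]
    exact (Real.exp_le_exp.2 k1).trans k2
  · have k1 : (a - 1) / Real.exp 1 ≤ 1 := by rw [div_le_one he]; linarith
    calc Real.exp ((a - 1) / Real.exp 1) ≤ Real.exp 1 := Real.exp_le_exp.2 k1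
    _ ≤ a := h.le

/-- Weierstrass inequality. -/
lemma aux_one_add_sum_le_prod {ι : Type*} (F : Finset ι) (a : ι → ℝ)
    (h : ∀ i ∈ F, 1 ≤ a i) : 1 + ∑ i ∈ F, (a i - 1) ≤ ∏ i ∈ F, a i := by
  classical
  induction F using Finset.induction_on with
  | empty => simp
  | insert i F hni ih =>
    rw [Finset.sum_insert hni, Finset.prod_insert hni]
    have h1 : 1 ≤ a i := h i (Finset.mem_insert_self i F)
    have ih' := ih fun j hj => h j (Finset.mem_insert_of_mem hj)
    have hs : 0 ≤ ∑ j ∈ F, (a j - 1) :=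
      Finset.sum_nonneg fun j hj => by have := h j (Finset.mem_insert_of_mem hj); linarith
    nlinarith

/-- Core single-group inequality. -/
lemma aux_keyS {ι : Type*} (S' : Finset ι) (a : ι → ℝ) (M : ℝ)
    (h1 : ∀ i ∈ S', 1 ≤ a i) (hM : 0 < M) (hW : ∑ i ∈ S', (a i - 1) ≤ M) :
    M ≤ Real.exp ((M - ∑ i ∈ S', (a i - 1)) / Real.exp 1) * ∏ i ∈ S', a i := by
  have he : (0:ℝ) < Real.exp 1 := Real.exp_pos 1
  set W := ∑ i ∈ S', (a i - 1) with hWdef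
  have hW0 : 0 ≤ W := Finset.sum_nonneg fun i hi => by have := h1 i hi; linarith
  have hWn : ∀ i ∈ S', 0 ≤ a i - 1 := fun i hi => by have := h1 i hi; linarith
  rcases le_or_gt W (Real.exp 1) with hc | hc
  · have hai : ∀ i ∈ S', a i ≤ 1 + Real.exp 1 := by
      intro i hi
      have := Finset.single_le_sum hWn hi
      linarith
    have hprod : Real.exp (W / Real.exp 1) ≤ ∏ i ∈ S', a i := by
      have : W / Real.exp 1 = ∑ i ∈ S', ((a i - 1) / Real.exp 1) := by
        rw [hWdef, Finset.sum_div]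
      rw [this, Real.exp_sum]
      exact Finset.prod_le_prod (fun i _ => (Real.exp_pos _).le)
        (fun i hi => aux_exp_sub_one_le (h1 i hi) (hai i hi))
    calc M ≤ Real.exp (M / Real.exp 1) := aux_le_exp_div M
    _ = Real.exp ((M - W) / Real.exp 1) * Real.exp (W / Real.exp 1) := by
        rw [← Real.exp_add]; ring_nf
    _ ≤ Real.exp ((M - W) / Real.exp 1) * ∏ i ∈ S', a i := by
        exact mul_le_mul_of_nonneg_left hprod (Real.exp_pos _).le
  · have hwei := aux_one_add_sum_le_prod S' a h1
    have hprodW : W ≤ ∏ i ∈ S', a i := by linarith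
    have hz : 0 ≤ M - W := by linarith
    set u := (M - W) / Real.exp 1 with hu
    have hu0 : 0 ≤ u := by positivity
    have huE : u * Real.exp 1 = M - W := by rw [hu]; field_simp
    have hexp := Real.add_one_le_exp u
    have h2 : M ≤ W * Real.exp u := by nlinarith
    calc M ≤ W * Real.exp u := h2
    _ ≤ (∏ i ∈ S', a i) * Real.exp u :=
        mul_le_mul_of_nonneg_right hprodW (Real.exp_pos _).le
    _ = Real.exp u * ∏ i ∈ S', a i := mul_comm _ _

/-- Per-fiber key inequality. -/
lemma aux_key {ι : Type*} [DecidableEq ι] (F S' : Finset ι) (hSF : S' ⊆ F) (a : ι → ℝ) (M : ℝ)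
    (h1 : ∀ i ∈ F, 1 ≤ a i) (h2 : ∀ i ∈ F, i ∉ S' → a i ≤ 2) (hM : 0 < M)
    (hW : ∑ i ∈ S', (a i - 1) ≤ M) :
    M ≤ Real.exp ((M - ∑ i ∈ F, (a i - 1)) / Real.exp 1) * ∏ i ∈ F, a i := by
  have he : (0:ℝ) < Real.exp 1 := Real.exp_pos 1
  have h2e : (2:ℝ) ≤ 1 + Real.exp 1 := by
    have := Real.add_one_le_exp (1:ℝ); linarith
  have hsum : ∑ i ∈ F \ S', (a i - 1) + ∑ i ∈ S', (a i - 1) = ∑ i ∈ F, (a i - 1) :=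
    Finset.sum_sdiff hSF
  have hprodsplit : (∏ i ∈ F \ S', a i) * ∏ i ∈ S', a i = ∏ i ∈ F, a i :=
    Finset.prod_sdiff hSF
  set WT := ∑ i ∈ F \ S', (a i - 1) with hWT
  have hT : Real.exp (WT / Real.exp 1) ≤ ∏ i ∈ F \ S', a i := by
    have : WT / Real.exp 1 = ∑ i ∈ F \ S', ((a i - 1) / Real.exp 1) := by
      rw [hWT, Finset.sum_div]
    rw [this, Real.exp_sum]
    refine Finset.prod_le_prod (fun i _ => (Real.exp_pos _).le) (fun i hi => ?_)
    have hiF := Finset.mem_sdiff.1 hi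
    exact aux_exp_sub_one_le (h1 i hiF.1) (le_trans (h2 i hiF.1 hiF.2) h2e)
  have hS := aux_keyS S' a M (fun i hi => h1 i (hSF hi)) hM hW
  have hprodS : 0 ≤ ∏ i ∈ S', a i :=
    Finset.prod_nonneg fun i hi => le_trans zero_le_one (h1 i (hSF hi))
  calc M ≤ Real.exp ((M - ∑ i ∈ S', (a i - 1)) / Real.exp 1) * ∏ i ∈ S', a i := hS
  _ = Real.exp ((M - ∑ i ∈ F, (a i - 1)) / Real.exp 1) * Real.exp (WT / Real.exp 1)
        * ∏ i ∈ S', a i := by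
      rw [← Real.exp_add, ← add_div]
      have h9 : M - ∑ i ∈ S', (a i - 1) = M - ∑ i ∈ F, (a i - 1) + WT := by linarith
      rw [h9]
  _ ≤ Real.exp ((M - ∑ i ∈ F, (a i - 1)) / Real.exp 1) * (∏ i ∈ F \ S', a i)
        * ∏ i ∈ S', a i := by
      have := mul_le_mul_of_nonneg_left hT (Real.exp_pos ((M - ∑ i ∈ F, (a i - 1)) / Real.exp 1)).le
      exact mul_le_mul_of_nonneg_right this hprodS
  _ = Real.exp ((M - ∑ i ∈ F, (a i - 1)) / Real.exp 1) * ∏ i ∈ F, a i := by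
      rw [mul_assoc, hprodsplit]

/-- If `(x,p)` is pEF1 and every bundle lies in its owner's MBB set
(for positive prices), then `x` is an `e^{1/e}`-approximation to the maximum
Nash social welfare. -/
theorem pEF1_MBB_nsw {n m : ℕ} (v : Fin n → Fin m → ℝ)
    (hv : ∀ i g, 0 ≤ v i g)
    (p : Fin m → ℝ) (hp : ∀ g, 0 < p g)
    (x : Fin n → Finset (Fin m)) (hx : IsAllocation x)
    (h1 : PEF1 p x)
    (h2 : ∀ i : Fin n, ∀ g ∈ x i, g ∈ MBB v p i) :
    ∀ y : Fin n → Finset (Fin m), IsAllocation y →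
      Real.exp (-(n : ℝ) / Real.exp 1) * ∏ i, val v i (y i) ≤ ∏ i, val v i (x i) := by
  classical
  intro y hy
  rcases Nat.eq_zero_or_pos n with hn | hn
  · subst hn
    simp
  have hvx : ∀ i, 0 ≤ val v i (x i) := fun i => Finset.sum_nonneg fun g _ => hv i g
  have hvy : ∀ i, 0 ≤ val v i (y i) := fun i => Finset.sum_nonneg fun g _ => hv i g
  by_cases hy0 : ∃ i, val v i (y i) = 0
  · obtain ⟨i0, h0⟩ := hy0
    rw [Finset.prod_eq_zero (Finset.mem_univ i0) h0, mul_zero]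
    exact Finset.prod_nonneg fun i _ => hvx i
  push_neg at hy0
  have hvy' : ∀ i, 0 < val v i (y i) := fun i => lt_of_le_of_ne (hvy i) (Ne.symm (hy0 i))
  -- owner functions
  choose owx howx huniqx using hx
  choose owy howy huniqy using hy
  have hmemx : ∀ g (i : Fin n), g ∈ x i ↔ owx g = i := by
    intro g i
    constructor
    · intro h; exact (huniqx g i h).symm ▸ rfl
    · intro h; exact h ▸ howx g
  have hmemy : ∀ g (i : Fin n), g ∈ y i ↔ owy g = i := by
    intro g i
    constructor
    · intro h; exact (huniqy g i h).symm ▸ rfl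
    · intro h; exact h ▸ howy g
  have hxfib : ∀ i, x i = Finset.univ.filter (fun g => owx g = i) := by
    intro i; ext g; simp [hmemx g i]
  have hyfib : ∀ i, y i = Finset.univ.filter (fun g => owy g = i) := by
    intro i; ext g; simp [hmemy g i]
  -- nonemptiness of y bundles
  have hy_ne : ∀ i, (y i).Nonempty := by
    intro i
    rcases Finset.eq_empty_or_nonempty (y i) with h | h
    · exfalso; have := hvy' i; rw [h] at this; simp [_root_.val] at this
    · exact h
  have hpy_pos : ∀ i, 0 < price p (y i) := fun i => Finset.sum_pos (fun g _ => hp g) (hy_ne i)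
  have hpS_nonneg : ∀ S : Finset (Fin m), 0 ≤ price p S :=
    fun S => Finset.sum_nonneg fun g _ => (hp g).le
  -- x bundles are nonempty
  have hx_ne : ∀ i, (x i).Nonempty := by
    by_contra hcon
    push_neg at hcon
    obtain ⟨i0, hi0⟩ := hcon
    have hcard : ∀ j, (x j).card ≤ 1 := by
      intro j
      by_contra hc
      push_neg at hc
      have hne : (x j).Nonempty := Finset.card_pos.1 (by omega)
      have hpos : 0 < price p (x j) := Finset.sum_pos (fun g _ => hp g) hne
      have h00 : price p (x i0) = 0 := by rw [hi0]; simp [price]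
      obtain ⟨g, hg, hle⟩ := h1 i0 j (by rw [h00]; exact hpos)
      have hne2 : ((x j).erase g).Nonempty := by
        rw [← Finset.card_pos, Finset.card_erase_of_mem hg]; omega
      have : 0 < price p ((x j).erase g) := Finset.sum_pos (fun g _ => hp g) hne2
      rw [h00] at hle
      linarith
    have hmn : m ≤ n - 1 := by
      have hme : (Finset.univ : Finset (Fin m)).card
          = ∑ j : Fin n, (Finset.univ.filter (fun g => owx g = j)).card :=
        Finset.card_eq_sum_card_fiberwise fun g _ => Finset.mem_univ (owx g)
      rw [Finset.card_univ, Fintype.card_fin] at hme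
      have hme2 : m = ∑ j : Fin n, (x j).card :=
        hme.trans (Finset.sum_congr rfl fun j _ => by rw [hxfib j]).symm
      have hsplit : ∑ j ∈ Finset.univ.erase i0, (x j).card + (x i0).card
          = ∑ j : Fin n, (x j).card := Finset.sum_erase_add _ _ (Finset.mem_univ i0)
      have hbound : ∑ j ∈ Finset.univ.erase i0, (x j).card
          ≤ (Finset.univ.erase i0).card * 1 :=
        Finset.sum_le_card_nsmul _ _ 1 fun j _ => hcard j
      have hcarderase : (Finset.univ.erase i0).card = n - 1 := by
        rw [Finset.card_erase_of_mem (Finset.mem_univ i0), Finset.card_univ, Fintype.card_fin]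
      have hzero : (x i0).card = 0 := by rw [hi0]; rfl
      omega
    have hnm : n ≤ m := by
      have hinj : Function.Injective (fun i => (hy_ne i).choose) := by
        intro i j hij
        simp only at hij
        have hi : owy ((hy_ne i).choose) = i := (hmemy _ _).1 (hy_ne i).choose_spec
        have hj : owy ((hy_ne j).choose) = j := (hmemy _ _).1 (hy_ne j).choose_spec
        rw [← hi, ← hj, hij]
      have := Fintype.card_le_of_injective _ hinj
      simpa using this
    omega
  have hpx_pos : ∀ i, 0 < price p (x i) := fun i => Finset.sum_pos (fun g _ => hp g) (hx_ne i)
  -- MBB ratios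
  set gs : ∀ i : Fin n, Fin m := fun i => (hx_ne i).choose with hgs
  set α : Fin n → ℝ := fun i => v i (gs i) / p (gs i) with hα
  have hgs_mem : ∀ i, gs i ∈ x i := fun i => (hx_ne i).choose_spec
  have hval_ratio : ∀ i, ∀ g ∈ x i, v i g = α i * p g := by
    intro i g hg
    have hA := h2 i (gs i) (hgs_mem i) g
    have hB := h2 i g hg (gs i)
    have : v i g / p g = α i := le_antisymm hA hB
    rw [← this, div_mul_cancel₀]
    exact (hp g).ne'
  have hval_x : ∀ i, val v i (x i) = α i * price p (x i) := by
    intro i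
    rw [_root_.val, price, Finset.mul_sum]
    exact Finset.sum_congr rfl fun g hg => hval_ratio i g hg
  have hval_y : ∀ i, val v i (y i) ≤ α i * price p (y i) := by
    intro i
    rw [_root_.val, price, Finset.mul_sum]
    refine Finset.sum_le_sum fun g _ => ?_
    have h4 : v i g / p g ≤ α i := h2 i (gs i) (hgs_mem i) g
    rw [div_le_iff₀ (hp g)] at h4
    linarith
  have hα_pos : ∀ i, 0 < α i := by
    intro i
    by_contra hcon
    push_neg at hcon
    have hq := hval_y i
    have := hvy' i
    nlinarith [hpy_pos i]
  -- core price inequality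

  have hcore : ∏ j, price p (y j) ≤ Real.exp ((n : ℝ) / Real.exp 1) * ∏ i, price p (x i) := by
    obtain ⟨istar, -, hmin⟩ := Finset.exists_min_image Finset.univ (fun i => price p (x i))
      ⟨⟨0, hn⟩, Finset.mem_univ _⟩
    set μ := price p (x istar) with hμ
    have hμpos : 0 < μ := hpx_pos istar
    have hminle : ∀ i, μ ≤ price p (x i) := fun i => hmin i (Finset.mem_univ i)
    have hbigex : ∀ i : Fin n, ∃ g : Fin m, 2 * μ < price p (x i) →
        g ∈ x i ∧ price p ((x i).erase g) ≤ μ := by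
      intro i
      by_cases hb : 2 * μ < price p (x i)
      · obtain ⟨g, hg, hle⟩ := h1 istar i (by linarith)
        exact ⟨g, fun _ => ⟨hg, hle⟩⟩
      · exact ⟨gs i, fun hcon => absurd hcon hb⟩
    choose G hG using hbigex
    set f : Fin n → Fin n := fun i => if 2 * μ < price p (x i) then owy (G i) else i with hf
    set a : Fin n → ℝ := fun i => price p (x i) / μ with ha
    set Mv : Fin n → ℝ := fun j => price p (y j) / μ with hMv
    have ha1 : ∀ i, 1 ≤ a i := fun i => (one_le_div hμpos).2 (hminle i)
    have hM0 : ∀ j, 0 < Mv j := fun j => div_pos (hpy_pos j) hμpos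
    have hsumx : ∑ i, price p (x i) = ∑ g, p g := by
      rw [← Finset.sum_fiberwise (Finset.univ : Finset (Fin m)) owx p]
      exact Finset.sum_congr rfl fun i _ => by rw [price, hxfib i]
    have hsumy : ∑ i, price p (y i) = ∑ g, p g := by
      rw [← Finset.sum_fiberwise (Finset.univ : Finset (Fin m)) owy p]
      exact Finset.sum_congr rfl fun i _ => by rw [price, hyfib i]
    have hsumM : ∑ j, Mv j = ∑ i, a i := by
      rw [hMv, ha, ← Finset.sum_div, ← Finset.sum_div, hsumx, hsumy]
    have hfiber : ∀ j : Fin n, Mv j ≤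
        Real.exp ((Mv j - ∑ i ∈ Finset.univ.filter (fun i => f i = j), (a i - 1)) / Real.exp 1)
          * ∏ i ∈ Finset.univ.filter (fun i => f i = j), a i := by
      intro j
      refine aux_key (Finset.univ.filter (fun i => f i = j))
        ((Finset.univ.filter (fun i => f i = j)).filter (fun i => 2 * μ < price p (x i)))
        (Finset.filter_subset _ _) a (Mv j) (fun i _ => ha1 i) ?_ (hM0 j) ?_
      · intro i hiF hiS
        have hnb : ¬ 2 * μ < price p (x i) := fun hb => hiS (Finset.mem_filter.2 ⟨hiF, hb⟩)
        push_neg at hnb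
        rw [ha]
        exact (div_le_iff₀ hμpos).2 (by linarith)
      · set S' := (Finset.univ.filter (fun i => f i = j)).filter
          (fun i => 2 * μ < price p (x i)) with hS'
        have hbig : ∀ i ∈ S', 2 * μ < price p (x i) := fun i hi => (Finset.mem_filter.1 hi).2
        have hGmem : ∀ i ∈ S', G i ∈ x i := fun i hi => (hG i (hbig i hi)).1
        have hterm : ∀ i ∈ S', a i - 1 ≤ p (G i) / μ := by
          intro i hi
          have hGle : price p ((x i).erase (G i)) ≤ μ := (hG i (hbig i hi)).2
          have herase : p (G i) + price p ((x i).erase (G i)) = price p (x i) := by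
            rw [price, price]
            exact Finset.add_sum_erase _ _ (hGmem i hi)
          have hd : price p (x i) - μ ≤ p (G i) := by linarith
          have heq : a i - 1 = (price p (x i) - μ) / μ := by
            rw [ha]; field_simp
          rw [heq]
          gcongr
        have hinj : ∀ i ∈ S', ∀ k ∈ S', G i = G k → i = k := by
          intro i hi k hk hik
          have h1' : owx (G i) = i := (hmemx _ _).1 (hGmem i hi)
          have h2' : owx (G k) = k := (hmemx _ _).1 (hGmem k hk)
          rw [← h1', ← h2', hik]
        have hsub : S'.image G ⊆ y j := by
          intro g hg
          obtain ⟨i, hi, rfl⟩ := Finset.mem_image.1 hg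
          have hfeq : f i = j := (Finset.mem_filter.1 (Finset.mem_filter.1 hi).1).2
          have hfi : f i = owy (G i) := by rw [hf]; simp [if_pos (hbig i hi)]
          rw [hmemy, ← hfi, hfeq]
        have hsum1 : ∑ i ∈ S', p (G i) ≤ price p (y j) := by
          rw [← Finset.sum_image hinj]
          exact Finset.sum_le_sum_of_subset_of_nonneg hsub (fun g _ _ => (hp g).le)
        calc ∑ i ∈ S', (a i - 1) ≤ ∑ i ∈ S', p (G i) / μ := Finset.sum_le_sum hterm
        _ = (∑ i ∈ S', p (G i)) / μ := by rw [Finset.sum_div]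
        _ ≤ price p (y j) / μ := by gcongr
        _ = Mv j := rfl
    have hprodM : ∏ j, Mv j ≤ Real.exp ((n : ℝ) / Real.exp 1) * ∏ i, a i := by
      calc ∏ j, Mv j
          ≤ ∏ j, (Real.exp ((Mv j - ∑ i ∈ Finset.univ.filter (fun i => f i = j), (a i - 1))
              / Real.exp 1) * ∏ i ∈ Finset.univ.filter (fun i => f i = j), a i) :=
            Finset.prod_le_prod (fun j _ => (hM0 j).le) (fun j _ => hfiber j)
      _ = (∏ j, Real.exp ((Mv j - ∑ i ∈ Finset.univ.filter (fun i => f i = j), (a i - 1))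
              / Real.exp 1)) * ∏ j, ∏ i ∈ Finset.univ.filter (fun i => f i = j), a i :=
            Finset.prod_mul_distrib
      _ = Real.exp (∑ j, ((Mv j - ∑ i ∈ Finset.univ.filter (fun i => f i = j), (a i - 1))
              / Real.exp 1)) * ∏ i, a i := by
            rw [← Real.exp_sum, Finset.prod_fiberwise]
      _ = Real.exp ((n : ℝ) / Real.exp 1) * ∏ i, a i := by
            congr 2
            rw [← Finset.sum_div]
            congr 1
            rw [Finset.sum_sub_distrib, Finset.sum_fiberwise, hsumM, Finset.sum_sub_distrib]
            simp
    have hL : ∏ j, Mv j = (∏ j, price p (y j)) / μ ^ n := by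
      rw [hMv, Finset.prod_div_distrib, Finset.prod_const, Finset.card_univ, Fintype.card_fin]
    have hR : ∏ i, a i = (∏ i, price p (x i)) / μ ^ n := by
      rw [ha, Finset.prod_div_distrib, Finset.prod_const, Finset.card_univ, Fintype.card_fin]
    rw [hL, hR] at hprodM
    have hμn : (0:ℝ) < μ ^ n := pow_pos hμpos n
    rw [div_le_iff₀ hμn] at hprodM
    calc ∏ j, price p (y j) ≤ Real.exp ((n : ℝ) / Real.exp 1)
          * ((∏ i, price p (x i)) / μ ^ n) * μ ^ n := hprodM
    _ = Real.exp ((n : ℝ) / Real.exp 1) * ∏ i, price p (x i) := by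
        field_simp

  -- conclude
  have hαnn : ∀ i, (0:ℝ) ≤ α i := fun i => (hα_pos i).le
  calc Real.exp (-(n : ℝ) / Real.exp 1) * ∏ i, val v i (y i)
      ≤ Real.exp (-(n : ℝ) / Real.exp 1) * ∏ i, (α i * price p (y i)) := by
        refine mul_le_mul_of_nonneg_left ?_ (Real.exp_pos _).le
        exact Finset.prod_le_prod (fun i _ => hvy i) (fun i _ => hval_y i)
  _ = Real.exp (-(n : ℝ) / Real.exp 1) * ((∏ i, α i) * ∏ i, price p (y i)) := by
        rw [Finset.prod_mul_distrib]
  _ ≤ Real.exp (-(n : ℝ) / Real.exp 1) *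
        ((∏ i, α i) * (Real.exp ((n : ℝ) / Real.exp 1) * ∏ i, price p (x i))) := by
        refine mul_le_mul_of_nonneg_left ?_ (Real.exp_pos _).le
        exact mul_le_mul_of_nonneg_left hcore (Finset.prod_nonneg fun i _ => hαnn i)
  _ = (Real.exp (-(n : ℝ) / Real.exp 1) * Real.exp ((n : ℝ) / Real.exp 1)) *
        ((∏ i, α i) * ∏ i, price p (x i)) := by ring
  _ = ∏ i, (α i * price p (x i)) := by
        rw [← Real.exp_add, Finset.prod_mul_distrib]
        have hz : -(n : ℝ) / Real.exp 1 + (n : ℝ) / Real.exp 1 = 0 := by ring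
        rw [hz, Real.exp_zero, one_mul]
  _ = ∏ i, val v i (x i) := Finset.prod_congr rfl fun i _ => (hval_x i).symm
end
end

section
/- (Price-increasing step preserves MBB allocation.) Let (N, M, V) be a fair division instance, p a price vector with all prices positive, and x an allocation with x_i ⊆ MBB_i for every agent i. Let R_N ⊆ N and R_M ⊆ M satisfy: x_i ⊆ R_M for every i ∈ R_N; x_i ∩ R_M = ∅ for every i ∉ R_N; and MBB_i ⊆ R_M for every i ∈ R_N. Let β > 1 be a real number such that β · v_{jg} ≤ α_j · p_g for every j ∈ R_N and every g ∈ M \ R_M, and define a new price vector p' by p'_g = β · p_g for g ∈ R_M and p'_g = p_g for g ∉ R_M. Then x_i ⊆ MBB'_i for every agent i ∈ N, where MBB'_i is the MBB set of agent i with respect to p'. -/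
open Finset

noncomputable section

/-- The maximum bang-per-buck ratio of agent `i`. -/
def alphaMax {n m : ℕ} (hm : 0 < m) (v : Fin n → Fin m → ℝ) (p : Fin m → ℝ)
    (i : Fin n) : ℝ :=
  Finset.univ.sup' ⟨⟨0, hm⟩, Finset.mem_univ _⟩ (fun g => v i g / p g)

/-- A price-increasing step on the reachable goods `R_M` preserves the
property that each agent's bundle lies in their MBB set. -/
theorem price_increase_preserves_MBB {n m : ℕ} (hm : 0 < m)
    (v : Fin n → Fin m → ℝ) (hv : ∀ i g, 0 ≤ v i g)
    (p : Fin m → ℝ) (hp : ∀ g, 0 < p g)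
    (x : Fin n → Finset (Fin m)) (hx : IsAllocation x)
    (hmbb : ∀ i : Fin n, ∀ g ∈ x i, g ∈ MBB v p i)
    (RN : Set (Fin n)) (RM : Set (Fin m))
    (hRN1 : ∀ i ∈ RN, ∀ g ∈ x i, g ∈ RM)
    (hRN2 : ∀ i ∉ RN, ∀ g ∈ x i, g ∉ RM)
    (hRN3 : ∀ i ∈ RN, MBB v p i ⊆ RM)
    (β : ℝ) (hβ : 1 < β)
    (hβ2 : ∀ j ∈ RN, ∀ g ∉ RM, β * v j g ≤ alphaMax hm v p j * p g)
    (p' : Fin m → ℝ)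
    (hp'1 : ∀ g ∈ RM, p' g = β * p g)
    (hp'2 : ∀ g ∉ RM, p' g = p g) :
    ∀ i : Fin n, ∀ g ∈ x i, g ∈ MBB v p' i := by
  intro i g hg
  have hgm := hmbb i g hg
  have hα : alphaMax hm v p i = v i g / p g := by
    unfold alphaMax
    exact le_antisymm (Finset.sup'_le _ _ fun h _ => hgm h)
      (Finset.le_sup' (fun h => v i h / p h) (Finset.mem_univ g))
  have hβ0 : (0:ℝ) < β := lt_trans one_pos hβ
  intro h
  by_cases hiRN : i ∈ RN
  · have hgRM : g ∈ RM := hRN1 i hiRN g hg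
    rw [hp'1 g hgRM]
    by_cases hhRM : h ∈ RM
    · rw [hp'1 h hhRM]
      have := hgm h
      rw [div_le_div_iff₀ (hp h) (hp g)] at this
      rw [div_le_div_iff₀ (mul_pos hβ0 (hp h)) (mul_pos hβ0 (hp g))]
      nlinarith
    · rw [hp'2 h hhRM]
      have key := hβ2 i hiRN h hhRM
      rw [hα] at key
      have hpg := hp g
      rw [div_mul_eq_mul_div, le_div_iff₀ hpg] at key
      rw [div_le_div_iff₀ (hp h) (mul_pos hβ0 (hp g))]
      nlinarith [hp h]
  · have hgRM : g ∉ RM := fun hc => hRN2 i hiRN g hg hc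
    rw [hp'2 g hgRM]
    by_cases hhRM : h ∈ RM
    · rw [hp'1 h hhRM]
      have := hgm h
      rw [div_le_div_iff₀ (hp h) (hp g)] at this
      rw [div_le_div_iff₀ (mul_pos hβ0 (hp h)) (hp g)]
      nlinarith [mul_nonneg (mul_nonneg (hv i g) (hp h).le) (sub_nonneg.2 hβ.le)]
    · rw [hp'2 h hhRM]
      exact hgm h
end
end

section
/- (Transfer step preserves the spending lower bound.) Let (N, M, V) be a fair division instance, x an allocation, p a price vector, and let V* := max_{i∈N} p̂(x_i). Let k ∈ N and suppose p(x_i) ≥ V* for every agent i ≠ k. Let i_0 = k, i_1, …, i_ℓ be distinct agents and g_1, …, g_ℓ be distinct goods with g_r ∈ x_{i_r} for each r ∈ {1,…,ℓ}. Let a ∈ {1,…,ℓ} be the smallest index with p(x_{i_a} \ {g_a}) ≥ V* (assume such an index exists), and let b be the largest index in {1,…,a−1} with V* ≥ p((x_{i_b} ∪ {g_{b+1}}) \ {g_b}), setting b = 0 if no such index exists. Define the allocation x' by: x'_{i_a} = x_{i_a} \ {g_a}; x'_{i_b} = x_{i_b} ∪ {g_{b+1}}; x'_{i_c} = (x_{i_c}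 ∪ {g_{c+1}}) \ {g_c} for each c with b < c < a; and x'_i = x_i for all other agents i. Then p(x'_i) ≥ V* for every agent i ≠ k. -/
open Finset

noncomputable section

/-- The transfer step along a path preserves the spending lower bound
`p(x'_i) ≥ V*` for every agent `i ≠ k`. -/
theorem transfer_preserves_spending {n m : ℕ}
    (v : Fin n → Fin m → ℝ) (hv : ∀ i g, 0 ≤ v i g)
    (p : Fin m → ℝ) (hp : ∀ g, 0 ≤ p g)
    (x : Fin n → Finset (Fin m)) (hx : IsAllocation x)
    (k : Fin n) (Vstar : ℝ)
    (hV : Vstar = Finset.univ.sup' ⟨k, Finset.mem_univ k⟩ (fun j => phat p (x j)))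
    (hexc : ∀ i : Fin n, i ≠ k → Vstar ≤ price p (x i))
    (ℓ : ℕ) (hℓ : 1 ≤ ℓ)
    (i : ℕ → Fin n) (g : ℕ → Fin m)
    (hi0 : i 0 = k)
    (hi_inj : ∀ r s, r ≤ ℓ → s ≤ ℓ → i r = i s → r = s)
    (hg_inj : ∀ r s, 1 ≤ r → r ≤ ℓ → 1 ≤ s → s ≤ ℓ → g r = g s → r = s)
    (hg_mem : ∀ r, 1 ≤ r → r ≤ ℓ → g r ∈ x (i r))
    (a : ℕ) (ha1 : 1 ≤ a) (ha2 : a ≤ ℓ)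
    (ha : Vstar ≤ price p ((x (i a)).erase (g a)))
    (ha_min : ∀ r, 1 ≤ r → r < a → price p ((x (i r)).erase (g r)) < Vstar)
    (b : ℕ) (hb : b < a)
    (hb_cond : 1 ≤ b → price p ((insert (g (b+1)) (x (i b))).erase (g b)) ≤ Vstar)
    (hb_max : ∀ c, b < c → c < a →
      Vstar < price p ((insert (g (c+1)) (x (i c))).erase (g c)))
    (x' : Fin n → Finset (Fin m))
    (hx'a : x' (i a) = (x (i a)).erase (g a))
    (hx'b : x' (i b) = insert (g (b+1)) (x (i b)))
    (hx'c : ∀ c, b < c → c < a → x' (i c) = (insert (g (c+1)) (x (i c))).erase (g c))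
    (hx'other : ∀ j : Fin n, (∀ r, b ≤ r → r ≤ a → j ≠ i r) → x' j = x j) :
    ∀ j : Fin n, j ≠ k → Vstar ≤ price p (x' j) := by
  intro j hjk
  by_cases hcase : ∃ r, b ≤ r ∧ r ≤ a ∧ j = i r
  · obtain ⟨r, hbr, hra, hjr⟩ := hcase
    rcases eq_or_lt_of_le hra with hra' | hra'
    · rw [hjr, hra', hx'a]; exact ha
    · rcases eq_or_lt_of_le hbr with hbr' | hbr'
      · have hb1 : 1 ≤ b := by
          by_contra h
          have hb0 : b = 0 := by omega
          exact hjk (by rw [hjr, ← hbr', hb0, hi0])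
        have hibk : i b ≠ k := by
          intro h
          have := hi_inj b 0 (by omega) (by omega) (h.trans hi0.symm)
          omega
        have h1 : Vstar ≤ price p (x (i b)) := hexc (i b) hibk
        have h2 : price p (x (i b)) ≤ price p (insert (g (b+1)) (x (i b))) :=
          Finset.sum_le_sum_of_subset_of_nonneg (Finset.subset_insert _ _)
            (fun _ _ _ => hp _)
        rw [hjr, ← hbr', hx'b]
        exact h1.trans h2
      · rw [hjr, hx'c r hbr' hra']
        exact le_of_lt (hb_max r hbr' hra')
  · push_neg at hcase
    rw [hx'other j hcase]
    exact hexc j hjk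
end
end

section
/- (Transfer step does not increase the maximum violation.) Let (N, M, V) be a fair division instance, x an allocation, p a price vector, and let V* := max_{i∈N} p̂(x_i). Let k ∈ N and suppose p(x_i) ≥ V* for every agent i ≠ k and p(x_k) < V*. Let i_0 = k, i_1, …, i_ℓ be distinct agents and g_1, …, g_ℓ be distinct goods with g_r ∈ x_{i_r} for each r ∈ {1,…,ℓ}. Let a ∈ {1,…,ℓ} be the smallest index with p(x_{i_a} \ {g_a}) ≥ V* (assume such an index exists), and let b be the largest index in {1,…,a−1} with V* ≥ p((x_{i_b} ∪ {g_{b+1}}) \ {g_b}), setting b = 0 if no such index exists. Define the allocation x' by: x'_{i_a} = x_{i_a} \ {g_a}; x'_{i_b} = x_{i_b} ∪ {g_{b+1}}; x'_{i_c} = (x_{i_c} ∪ {g_{c+1}}) \ {g_c} for each c with b < c < a; and x'_i = x_i for all other agents i. Then max_{i∈N} p̂(x'_i) ≤ V*. -/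
open Finset

noncomputable section

lemma price_nonneg' {m : ℕ} {p : Fin m → ℝ} (hp : ∀ g, 0 ≤ p g)
    (S : Finset (Fin m)) : 0 ≤ price p S :=
  Finset.sum_nonneg fun g _ => hp g

lemma price_mono' {m : ℕ} {p : Fin m → ℝ} (hp : ∀ g, 0 ≤ p g)
    {S T : Finset (Fin m)} (h : S ⊆ T) : price p S ≤ price p T :=
  Finset.sum_le_sum_of_subset_of_nonneg h fun g _ _ => hp g

lemma phat_le_price_erase {m : ℕ} (p : Fin m → ℝ) {S : Finset (Fin m)}
    {g : Fin m} (hg : g ∈ S) : phat p S ≤ price p (S.erase g) := by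
  rw [phat, dif_pos ⟨g, hg⟩]
  exact Finset.inf'_le _ hg

lemma phat_nonneg' {m : ℕ} {p : Fin m → ℝ} (hp : ∀ g, 0 ≤ p g)
    (S : Finset (Fin m)) : 0 ≤ phat p S := by
  rw [phat]
  split
  · exact Finset.le_inf' _ _ fun g _ => price_nonneg' hp _
  · exact le_refl 0

lemma phat_mono' {m : ℕ} {p : Fin m → ℝ} (hp : ∀ g, 0 ≤ p g)
    {S T : Finset (Fin m)} (h : S ⊆ T) : phat p S ≤ phat p T := by
  by_cases hS : S.Nonempty
  · have hT : T.Nonempty := hS.mono h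
    obtain ⟨g0, hg0, heq⟩ := Finset.exists_mem_eq_inf' hT (fun g => price p (T.erase g))
    have hTeq : phat p T = price p (T.erase g0) := by rw [phat, dif_pos hT]; exact heq
    by_cases hg0S : g0 ∈ S
    · calc phat p S ≤ price p (S.erase g0) := phat_le_price_erase p hg0S
        _ ≤ price p (T.erase g0) := price_mono' hp (Finset.erase_subset_erase _ h)
        _ = phat p T := hTeq.symm
    · obtain ⟨g1, hg1⟩ := hS
      calc phat p S ≤ price p (S.erase g1) := phat_le_price_erase p hg1
        _ ≤ price p (T.erase g0) := price_mono' hp (by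
            intro y hy
            rw [Finset.mem_erase]
            have hyS : y ∈ S := Finset.mem_of_mem_erase hy
            exact ⟨fun hc => hg0S (hc ▸ hyS), h hyS⟩)
        _ = phat p T := hTeq.symm
  · rw [phat, dif_neg hS]
    exact phat_nonneg' hp T

/-- The transfer step along a path does not increase the maximum violation:
`p̂(x'_i) ≤ V*` for every agent `i`. -/
theorem transfer_no_increase_violation {n m : ℕ}
    (v : Fin n → Fin m → ℝ) (hv : ∀ i g, 0 ≤ v i g)
    (p : Fin m → ℝ) (hp : ∀ g, 0 ≤ p g)
    (x : Fin n → Finset (Fin m)) (hx : IsAllocation x)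
    (k : Fin n) (Vstar : ℝ)
    (hV : Vstar = Finset.univ.sup' ⟨k, Finset.mem_univ k⟩ (fun j => phat p (x j)))
    (hexc : ∀ i : Fin n, i ≠ k → Vstar ≤ price p (x i))
    (hk : price p (x k) < Vstar)
    (ℓ : ℕ) (hℓ : 1 ≤ ℓ)
    (i : ℕ → Fin n) (g : ℕ → Fin m)
    (hi0 : i 0 = k)
    (hi_inj : ∀ r s, r ≤ ℓ → s ≤ ℓ → i r = i s → r = s)
    (hg_inj : ∀ r s, 1 ≤ r → r ≤ ℓ → 1 ≤ s → s ≤ ℓ → g r = g s → r = s)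
    (hg_mem : ∀ r, 1 ≤ r → r ≤ ℓ → g r ∈ x (i r))
    (a : ℕ) (ha1 : 1 ≤ a) (ha2 : a ≤ ℓ)
    (ha : Vstar ≤ price p ((x (i a)).erase (g a)))
    (ha_min : ∀ r, 1 ≤ r → r < a → price p ((x (i r)).erase (g r)) < Vstar)
    (b : ℕ) (hb : b < a)
    (hb_cond : 1 ≤ b → price p ((insert (g (b+1)) (x (i b))).erase (g b)) ≤ Vstar)
    (hb_max : ∀ c, b < c → c < a →
      Vstar < price p ((insert (g (c+1)) (x (i c))).erase (g c)))
    (x' : Fin n → Finset (Fin m))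
    (hx'a : x' (i a) = (x (i a)).erase (g a))
    (hx'b : x' (i b) = insert (g (b+1)) (x (i b)))
    (hx'c : ∀ c, b < c → c < a → x' (i c) = (insert (g (c+1)) (x (i c))).erase (g c))
    (hx'other : ∀ j : Fin n, (∀ r, b ≤ r → r ≤ a → j ≠ i r) → x' j = x j) :
    ∀ j : Fin n, phat p (x' j) ≤ Vstar := by
  have hVle : ∀ j : Fin n, phat p (x j) ≤ Vstar := by
    intro j; rw [hV]; exact Finset.le_sup' (fun j => phat p (x j)) (Finset.mem_univ j)
  have huniq : ∀ (gd : Fin m) (i1 i2 : Fin n), gd ∈ x i1 → gd ∈ x i2 → i1 = i2 := by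
    intro gd i1 i2 h1 h2
    obtain ⟨w, -, hu⟩ := hx gd
    rw [hu i1 h1, hu i2 h2]
  intro j
  by_cases hj : ∃ r, b ≤ r ∧ r ≤ a ∧ j = i r
  · obtain ⟨r, hbr, hra, rfl⟩ := hj
    rcases eq_or_lt_of_le hra with hra0 | hra'
    · -- r = a
      rw [hra0, hx'a]
      exact le_trans (phat_mono' hp (Finset.erase_subset _ _)) (hVle _)
    rcases eq_or_lt_of_le hbr with hbeq | hbr'
    · -- r = b
      rw [← hbeq, hx'b]
      rcases Nat.eq_zero_or_pos b with hb0 | hr1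
      · -- b = 0
        subst hb0
        have hi1 : i 1 ≠ i 0 := fun hc => by
          have := hi_inj 1 0 hℓ (Nat.zero_le _) hc; omega
        have hg1 : g 1 ∉ x (i 0) := fun hc =>
          hi1 (huniq (g 1) (i 1) (i 0) (hg_mem 1 le_rfl hℓ) hc)
        calc phat p (insert (g 1) (x (i 0)))
            ≤ price p ((insert (g 1) (x (i 0))).erase (g 1)) :=
              phat_le_price_erase p (Finset.mem_insert_self _ _)
          _ = price p (x (i 0)) := by rw [Finset.erase_insert hg1]
          _ ≤ Vstar := by rw [hi0]; exact le_of_lt hk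
      · -- 1 ≤ b
        have hgb : g b ∈ insert (g (b+1)) (x (i b)) :=
          Finset.mem_insert_of_mem (hg_mem b hr1 (le_trans (le_of_lt hb) ha2))
        exact le_trans (phat_le_price_erase p hgb) (hb_cond hr1)
    · -- b < r < a
      rw [hx'c r hbr' hra']
      have hr1 : 1 ≤ r := Nat.one_le_iff_ne_zero.mpr (by omega)
      have hrl : r ≤ ℓ := le_trans (le_of_lt hra') ha2
      have hr1l : r + 1 ≤ ℓ := le_trans hra' ha2
      have hgne : g (r+1) ≠ g r := fun hc => by
        have := hg_inj (r+1) r (by omega) hr1l hr1 hrl hc; omega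
      have hine : i (r+1) ≠ i r := fun hc => by
        have := hi_inj (r+1) r hr1l hrl hc; omega
      have hgnotin : g (r+1) ∉ x (i r) := fun hc =>
        hine (huniq (g (r+1)) (i (r+1)) (i r) (hg_mem (r+1) (by omega) hr1l) hc)
      have hmem : g (r+1) ∈ (insert (g (r+1)) (x (i r))).erase (g r) :=
        Finset.mem_erase.mpr ⟨hgne, Finset.mem_insert_self _ _⟩
      calc phat p ((insert (g (r+1)) (x (i r))).erase (g r))
          ≤ price p (((insert (g (r+1)) (x (i r))).erase (g r)).erase (g (r+1))) :=
            phat_le_price_erase p hmem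
        _ = price p ((x (i r)).erase (g r)) := by
            congr 1
            ext y
            simp only [Finset.mem_erase, Finset.mem_insert]
            constructor
            · rintro ⟨hy1, hy2, (rfl | h)⟩
              · exact absurd rfl hy1
              · exact ⟨hy2, h⟩
            · rintro ⟨hy2, h⟩
              exact ⟨fun hc => hgnotin (hc ▸ h), hy2, Or.inr h⟩
        _ ≤ Vstar := le_of_lt (ha_min r hr1 hra')
  · push_neg at hj
    rw [hx'other j fun r h1 h2 => hj r h1 h2]
    exact hVle j
end
end

section
/- (Price-increasing step preserves the pEF1-except-k invariant.) Let (N, M, V) be a fair division instance, x an allocation, p a price vector, and let V* := max_{i∈N} p̂(x_i). Let k ∈ N and suppose p(x_i) ≥ V* for every agent i ≠ k. Let R_N ⊆ N and R_M ⊆ M satisfy: x_i ⊆ R_M for every i ∈ R_N and x_i ∩ R_M = ∅ for every i ∉ R_N. Suppose there exists an agent j ∉ R_N with p̂(x_j) = V*, and let β ≥ 1 be a real number with β · p̂(x_j) ≤ V* for every j ∈ R_N. Define a new price vector p' by p'_g = β · p_g for g ∈ R_M and p'_g = p_g for g ∉ R_M. Then max_{i∈N} p̂'(x_i) = V* and p'(x_i)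 ≥ max_{j∈N} p̂'(x_j) for every agent i ≠ k. -/
open Finset

noncomputable section

lemma price_congr' {m : ℕ} {p q : Fin m → ℝ} {S : Finset (Fin m)}
    (h : ∀ g ∈ S, p g = q g) : price p S = price q S :=
  Finset.sum_congr rfl h

lemma phat_congr' {m : ℕ} {p q : Fin m → ℝ} {S : Finset (Fin m)}
    (h : ∀ g ∈ S, p g = q g) : phat p S = phat q S := by
  unfold phat
  split
  · exact Finset.inf'_congr _ rfl fun g hg =>
      price_congr' fun a ha => h a (Finset.mem_of_mem_erase ha)
  · rfl

lemma price_smul' {m : ℕ} (β : ℝ) (p : Fin m → ℝ) (S : Finset (Fin m)) :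
    price (fun g => β * p g) S = β * price p S := by
  simp [price, Finset.mul_sum]

lemma mul_inf'' {α : Type*} {S : Finset α} (h : S.Nonempty) {β : ℝ} (hβ : 0 ≤ β)
    (f : α → ℝ) : S.inf' h (fun a => β * f a) = β * S.inf' h f := by
  apply le_antisymm
  · obtain ⟨a, ha, hfa⟩ := Finset.exists_mem_eq_inf' h f
    rw [hfa]
    exact Finset.inf'_le _ ha
  · apply Finset.le_inf'
    intro a ha
    exact mul_le_mul_of_nonneg_left (Finset.inf'_le f ha) hβ

lemma phat_smul' {m : ℕ} {β : ℝ} (hβ : 0 ≤ β) (p : Fin m → ℝ) (S : Finset (Fin m)) :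
    phat (fun g => β * p g) S = β * phat p S := by
  unfold phat
  split
  next h =>
    rw [show (fun g => price (fun g => β * p g) (S.erase g)) =
        (fun g => β * price p (S.erase g)) from funext fun g => price_smul' β p _,
      mul_inf'' h hβ]
  next => simp

/-- A price-increasing step preserves the pEF1-except-`k` invariant and
keeps the maximum violation equal to `V*`. -/
theorem price_increase_preserves_pEF1_except {n m : ℕ}
    (v : Fin n → Fin m → ℝ) (hv : ∀ i g, 0 ≤ v i g)
    (p : Fin m → ℝ) (hp : ∀ g, 0 ≤ p g)
    (x : Fin n → Finset (Fin m)) (hx : IsAllocation x)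
    (k : Fin n) (Vstar : ℝ)
    (hV : Vstar = Finset.univ.sup' ⟨k, Finset.mem_univ k⟩ (fun j => phat p (x j)))
    (hexc : ∀ i : Fin n, i ≠ k → Vstar ≤ price p (x i))
    (RN : Set (Fin n)) (RM : Set (Fin m))
    (hRN1 : ∀ i ∈ RN, ∀ g ∈ x i, g ∈ RM)
    (hRN2 : ∀ i ∉ RN, ∀ g ∈ x i, g ∉ RM)
    (hout : ∃ j : Fin n, j ∉ RN ∧ phat p (x j) = Vstar)
    (β : ℝ) (hβ : 1 ≤ β)
    (hβ2 : ∀ j ∈ RN, β * phat p (x j) ≤ Vstar)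
    (p' : Fin m → ℝ)
    (hp'1 : ∀ g ∈ RM, p' g = β * p g)
    (hp'2 : ∀ g ∉ RM, p' g = p g) :
    Finset.univ.sup' ⟨k, Finset.mem_univ k⟩ (fun i => phat p' (x i)) = Vstar ∧
      ∀ i : Fin n, i ≠ k →
        Finset.univ.sup' ⟨k, Finset.mem_univ k⟩ (fun j => phat p' (x j)) ≤
          price p' (x i) := by
  have hβ0 : (0:ℝ) ≤ β := le_trans zero_le_one hβ
  have hub : ∀ j, phat p (x j) ≤ Vstar := by
    intro j; rw [hV]; exact Finset.le_sup' (fun j => phat p (x j)) (Finset.mem_univ j)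
  have hin : ∀ i ∈ RN, price p' (x i) = β * price p (x i) ∧
      phat p' (x i) = β * phat p (x i) := by
    intro i hi
    have hc : ∀ g ∈ x i, p' g = β * p g := fun g hg => hp'1 g (hRN1 i hi g hg)
    exact ⟨(price_congr' hc).trans (price_smul' β p _),
      (phat_congr' hc).trans (phat_smul' hβ0 p _)⟩
  have hnotin : ∀ i ∉ RN, price p' (x i) = price p (x i) ∧
      phat p' (x i) = phat p (x i) := by
    intro i hi
    have hc : ∀ g ∈ x i, p' g = p g := fun g hg => hp'2 g (hRN2 i hi g hg)
    exact ⟨price_congr' hc, phat_congr' hc⟩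
  have hub' : ∀ j, phat p' (x j) ≤ Vstar := by
    intro j
    by_cases hj : j ∈ RN
    · rw [(hin j hj).2]; exact hβ2 j hj
    · rw [(hnotin j hj).2]; exact hub j
  have hsup : Finset.univ.sup' ⟨k, Finset.mem_univ k⟩ (fun i => phat p' (x i)) = Vstar := by
    apply le_antisymm
    · exact Finset.sup'_le _ _ fun j _ => hub' j
    · obtain ⟨j, hjRN, hj⟩ := hout
      calc Vstar = phat p' (x j) := by rw [(hnotin j hjRN).2, hj]
        _ ≤ _ := Finset.le_sup' (fun i => phat p' (x i)) (Finset.mem_univ j)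
  refine ⟨hsup, fun i hik => ?_⟩
  rw [hsup]
  by_cases hi : i ∈ RN
  · rw [(hin i hi).1]
    have hpos : 0 ≤ price p (x i) := Finset.sum_nonneg fun g _ => hp g
    calc Vstar ≤ price p (x i) := hexc i hik
      _ ≤ β * price p (x i) := le_mul_of_one_le_left hpos hβ
  · rw [(hnotin i hi).1]; exact hexc i hik
end
end

section
/- Let (N, M, V) be a fair division instance satisfying Hall's condition, let x be an allocation, and let R_N ⊆ N and R_M ⊆ M be such that: every good of R_M is held by some agent of R_N (for every g ∈ R_M there exists i ∈ R_N with g ∈ x_i); every agent of R_N holds at most one good (|x_i| ≤ 1 for every i ∈ R_N); and some agent of R_N holds no good. Then there exist an agent j ∈ R_N and a good g ∈ M \ R_M with v_{jg} > 0. -/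
open Finset

noncomputable section

open Classical in
/-- The set of goods positively valued by some agent of `A`. -/
noncomputable def Gamma {n m : ℕ} (v : Fin n → Fin m → ℝ) (A : Finset (Fin n)) :
    Finset (Fin m) :=
  Finset.univ.filter (fun g => ∃ i ∈ A, 0 < v i g)

/-- Hall's condition for a fair division instance. -/
def HallCondition {n m : ℕ} (v : Fin n → Fin m → ℝ) : Prop :=
  ∀ A : Finset (Fin n), A.card ≤ (Gamma v A).card

/-- Under Hall's condition, if every good of `R_M` is held by an agent of
`R_N`, every agent of `R_N` holds at most one good, and some agent of `R_N` holds no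
good, then some agent of `R_N` positively values a good outside `R_M`. -/
theorem exists_valued_good_outside {n m : ℕ} (v : Fin n → Fin m → ℝ)
    (hv : ∀ i g, 0 ≤ v i g) (hHall : HallCondition v)
    (x : Fin n → Finset (Fin m)) (hx : IsAllocation x)
    (RN : Finset (Fin n)) (RM : Finset (Fin m))
    (hheld : ∀ g ∈ RM, ∃ i ∈ RN, g ∈ x i)
    (hone : ∀ i ∈ RN, (x i).card ≤ 1)
    (hnone : ∃ i ∈ RN, x i = ∅) :
    ∃ j ∈ RN, ∃ g : Fin m, g ∉ RM ∧ 0 < v j g := by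
  classical
  obtain ⟨i0, hi0, hxi0⟩ := hnone
  set F : Fin m → Fin n := fun g => Classical.choose (hx g).exists with hF
  have hFmem : ∀ g, g ∈ x (F g) := fun g => Classical.choose_spec (hx g).exists
  have hFRN : ∀ g ∈ RM, F g ∈ RN := by
    intro g hg
    obtain ⟨i, hiRN, hgi⟩ := hheld g hg
    have : i = F g := by
      obtain ⟨j, hj, huniq⟩ := hx g
      rw [huniq i hgi, huniq (F g) (hFmem g)]
    rwa [← this]
  have hcard : RM.card < RN.card := by
    have h1 : RM.card ≤ (RN.erase i0).card := by
      apply Finset.card_le_card_of_injOn F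
      · intro g hg
        refine Finset.mem_erase.mpr ⟨?_, hFRN g hg⟩
        intro h
        have := hFmem g
        rw [h, hxi0] at this
        exact absurd this (Finset.notMem_empty g)
      · intro g1 h1 g2 h2 heq
        have hg1 : g1 ∈ x (F g2) := heq ▸ hFmem g1
        have hg2 : g2 ∈ x (F g2) := hFmem g2
        have hc := hone (F g2) (hFRN g2 h2)
        have := Finset.card_le_one.mp hc g1 hg1 g2 hg2
        exact this
    calc RM.card ≤ (RN.erase i0).card := h1
      _ < RN.card := Finset.card_erase_lt_of_mem hi0
  have h2 : RM.card < (Gamma v RN).card := lt_of_lt_of_le hcard (hHall RN)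
  have hns : ¬ (Gamma v RN ⊆ RM) := fun h => absurd (Finset.card_le_card h) (not_le.mpr h2)
  obtain ⟨g, hgG, hgRM⟩ := Finset.not_subset.mp hns
  simp only [Gamma, Finset.mem_filter] at hgG
  obtain ⟨-, j, hjRN, hjv⟩ := hgG
  exact ⟨j, hjRN, g, hgRM, hjv⟩
end
end

section
/- (Initialization of prices for a newly added agent.) Let M be a set of m ≥ 1 goods, let M' ⊆ M be nonempty with positive prices p_h > 0 for h ∈ M', let k be an agent with nonnegative values v_{kg} for g ∈ M and max_{h∈M} v_{kh} > 0, and let M_k ⊆ M \ M' be a set of goods with v_{kg} > 0 for every g ∈ M_k. Define prices for the goods of M_k by p_g = (v_{kg} · min_{h∈M'} p_h) / (m · max_{h∈M} v_{kh}). Then: (i) for every g ∈ M_k and every h ∈ M' ∪ M_k, v_{kg}/p_g ≥ v_{kh}/p_h (so M_k is contained in the set of bang-per-buck maximizing goods of agent k among M' ∪ M_k); and (ii) Σ_{g∈M_k} p_g ≤ min_{h∈M'} p_h. -/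
open Finset

noncomputable section

/-- Initialization of prices for a newly added agent `k`: the new goods
`M_k` are bang-per-buck maximizers for `k` among `M' ∪ M_k`, and their total price is
at most the minimum price in `M'`. -/
theorem init_prices {m : ℕ} (hm : 1 ≤ m)
    (v : Fin m → ℝ) (hv : ∀ g, 0 ≤ v g)
    (M' : Finset (Fin m)) (hM' : M'.Nonempty)
    (p : Fin m → ℝ) (hp : ∀ h ∈ M', 0 < p h)
    (hmax : 0 < Finset.univ.sup' ⟨⟨0, hm⟩, Finset.mem_univ _⟩ v)
    (Mk : Finset (Fin m)) (hMk : Disjoint Mk M') (hMkpos : ∀ g ∈ Mk, 0 < v g)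
    (hdef : ∀ g ∈ Mk, p g =
      v g * (M'.inf' hM' p) /
        ((m : ℝ) * Finset.univ.sup' ⟨⟨0, hm⟩, Finset.mem_univ _⟩ v)) :
    (∀ g ∈ Mk, ∀ h ∈ M' ∪ Mk, v h / p h ≤ v g / p g) ∧
      ∑ g ∈ Mk, p g ≤ M'.inf' hM' p := by
  set V := Finset.univ.sup' ⟨⟨0, hm⟩, Finset.mem_univ _⟩ v with hV
  set q := M'.inf' hM' p with hq
  have hqpos : 0 < q := (Finset.lt_inf'_iff hM').mpr fun h hh => hp h hh
  have hmpos : (0:ℝ) < m := by exact_mod_cast hm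
  have hm1 : (1:ℝ) ≤ m := by exact_mod_cast hm
  have hmV : 0 < (m:ℝ) * V := mul_pos hmpos hmax
  have hsup : ∀ h : Fin m, v h ≤ V := fun h => Finset.le_sup' v (Finset.mem_univ h)
  have hratio : ∀ g ∈ Mk, v g / p g = (m:ℝ) * V / q := by
    intro g hg
    rw [hdef g hg]
    have hvg := hMkpos g hg
    field_simp
  have hbound : ∀ h ∈ M', v h / p h ≤ (m:ℝ) * V / q := by
    intro h hh
    have h1 : v h / p h ≤ V / q :=
      div_le_div₀ hmax.le (hsup h) hqpos (Finset.inf'_le p hh)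
    have h2 : V / q ≤ (m:ℝ) * V / q :=
      div_le_div₀ (by positivity) (by nlinarith) hqpos le_rfl
    linarith
  constructor
  · intro g hg h hh
    rw [hratio g hg]
    rcases Finset.mem_union.mp hh with hh | hh
    · exact hbound h hh
    · rw [hratio h hh]
  · have hsum : ∑ g ∈ Mk, p g = (∑ g ∈ Mk, v g) * q / ((m:ℝ) * V) := by
      calc ∑ g ∈ Mk, p g = ∑ g ∈ Mk, v g * q / ((m:ℝ) * V) :=
            Finset.sum_congr rfl hdef
        _ = (∑ g ∈ Mk, v g) * q / ((m:ℝ) * V) := by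
            rw [← Finset.sum_div, ← Finset.sum_mul]
    rw [hsum]
    have hcard : (Mk.card : ℝ) ≤ m := by
      exact_mod_cast Finset.card_le_card (Finset.subset_univ Mk) |>.trans_eq (by simp)
    have hsv : ∑ g ∈ Mk, v g ≤ (Mk.card : ℝ) * V := by
      calc ∑ g ∈ Mk, v g ≤ ∑ _g ∈ Mk, V := Finset.sum_le_sum fun g _ => hsup g
        _ = (Mk.card : ℝ) * V := by simp [mul_comm]
    rw [div_le_iff₀ hmV]
    have hsv' : ∑ g ∈ Mk, v g ≤ (m:ℝ) * V := hsv.trans (by nlinarith)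
    nlinarith [hqpos.le]
end
end

section
/- (Transfer step along an MBB path preserves MBB allocation.) Let (N, M, V) be a fair division instance, p a price vector with all prices positive, and x an allocation with x_i ⊆ MBB_i for every agent i. Let i_0, i_1, …, i_ℓ be distinct agents and g_1, …, g_ℓ be distinct goods such that g_r ∈ x_{i_r} for each r ∈ {1,…,ℓ} and g_{r+1} ∈ MBB_{i_r} for each r ∈ {0,…,ℓ−1}. Let 0 ≤ b < a ≤ ℓ and define the allocation x' by: x'_{i_a} = x_{i_a} \ {g_a}; x'_{i_b} = x_{i_b} ∪ {g_{b+1}}; x'_{i_c} = (x_{i_c} ∪ {g_{c+1}}) \ {g_c} for each c with b < c < a; and x'_i = x_i for all other agents i. Then x'_i ⊆ MBB_i for every agent i ∈ N. -/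
open Finset

noncomputable section

/-- A transfer step along an MBB alternating path preserves the property
that each agent's bundle lies in their MBB set. -/
theorem transfer_preserves_MBB {n m : ℕ}
    (v : Fin n → Fin m → ℝ) (hv : ∀ i g, 0 ≤ v i g)
    (p : Fin m → ℝ) (hp : ∀ g, 0 < p g)
    (x : Fin n → Finset (Fin m)) (hx : IsAllocation x)
    (hmbb : ∀ i : Fin n, ∀ g ∈ x i, g ∈ MBB v p i)
    (ℓ : ℕ) (hℓ : 1 ≤ ℓ)
    (i : ℕ → Fin n) (g : ℕ → Fin m)
    (hi_inj : ∀ r s, r ≤ ℓ → s ≤ ℓ → i r = i s → r = s)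
    (hg_inj : ∀ r s, 1 ≤ r → r ≤ ℓ → 1 ≤ s → s ≤ ℓ → g r = g s → r = s)
    (hg_mem : ∀ r, 1 ≤ r → r ≤ ℓ → g r ∈ x (i r))
    (hg_mbb : ∀ r, r < ℓ → g (r+1) ∈ MBB v p (i r))
    (a b : ℕ) (hb : b < a) (ha : a ≤ ℓ)
    (x' : Fin n → Finset (Fin m))
    (hx'a : x' (i a) = (x (i a)).erase (g a))
    (hx'b : x' (i b) = insert (g (b+1)) (x (i b)))
    (hx'c : ∀ c, b < c → c < a → x' (i c) = (insert (g (c+1)) (x (i c))).erase (g c))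
    (hx'other : ∀ j : Fin n, (∀ r, b ≤ r → r ≤ a → j ≠ i r) → x' j = x j) :
    ∀ j : Fin n, ∀ h ∈ x' j, h ∈ MBB v p j := by
  intro j h hh
  by_cases hcase : ∃ r, b ≤ r ∧ r ≤ a ∧ j = i r
  · obtain ⟨r, hbr, hra, rfl⟩ := hcase
    rcases eq_or_lt_of_le hra with heq | hlt
    · subst heq
      rw [hx'a] at hh
      exact hmbb _ _ (Finset.mem_of_mem_erase hh)
    · rcases eq_or_lt_of_le hbr with heq | hlt'
      · subst heq
        rw [hx'b] at hh
        rcases Finset.mem_insert.mp hh with rfl | hh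
        · exact hg_mbb b (lt_of_lt_of_le hlt ha)
        · exact hmbb _ _ hh
      · rw [hx'c r hlt' hlt] at hh
        rcases Finset.mem_insert.mp (Finset.mem_of_mem_erase hh) with rfl | hh'
        · exact hg_mbb r (lt_of_lt_of_le hlt ha)
        · exact hmbb _ _ hh'
  · push_neg at hcase
    rw [hx'other j (fun r h1 h2 => hcase r h1 h2)] at hh
    exact hmbb _ _ hh
end
end
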